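/- Let G be an undirected graph on vertices {1,…,n} and d ≥ 1. If x : ℝ → (ℝ^d)^n is differentiable and satisfies xᵢ′(t) = F(x(t))_i for all i and all t, then the centroid (1/n)∑_{i=1}^n x_i(t) is constant in t. -/

import Mathlib

open Finset

/-- The bearing from agent `i` to agent `j`: the unit vector pointing from `x i` to `x j`,
or `0` when the agents coincide. -/
noncomputable def bearing {d n : ℕ} (x : Fin n → EuclideanSpace ℝ (Fin d)) (i j : Fin n) :
    EuclideanSpace ℝ (Fin d) :=
  ‖x j - x i‖⁻¹ • (x j - x i)

/-- The bearing-only consensus vector field `F(x)_i = ∑_{j ∈ N_i} u_{ij}(x)`. -/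
noncomputable def consField {d n : ℕ} (G : SimpleGraph (Fin n)) [DecidableRel G.Adj]
    (x : Fin n → EuclideanSpace ℝ (Fin d)) (i : Fin n) : EuclideanSpace ℝ (Fin d) :=
  ∑ j ∈ G.neighborFinset i, bearing x i j

lemma bearing_swap {d n : ℕ} (x : Fin n → EuclideanSpace ℝ (Fin d)) (i j : Fin n) :
    bearing x j i = -bearing x i j := by
  rw [bearing, bearing, ← neg_sub, norm_neg, smul_neg]

/-- Summing over ordered adjacent pairs, `(i, j)` cancels against `(j, i) ≠ (i, j)`. -/
theorem SimpleGraph.sum_sum_neighborFinset_eq_zero {V M : Type*} [Fintype V] [AddCommGroup M]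
    (G : SimpleGraph V) [DecidableRel G.Adj] {f : V → V → M}
    (hf : ∀ i j, G.Adj i j → f j i = -f i j) :
    ∑ i, ∑ j ∈ G.neighborFinset i, f i j = 0 := by
  simp_rw [neighborFinset_eq_filter, sum_filter]
  rw [← Fintype.sum_prod_type']
  refine sum_ninvolution Prod.swap (fun p => ?_) (fun p hp => ?_) (fun _ => mem_univ _)
    Prod.swap_swap
  · by_cases h : G.Adj p.1 p.2
    · simp [h, h.symm, hf _ _ h]
    · have h' : ¬G.Adj p.2 p.1 := fun h' => h h'.symm
      simp [h, h']
  · have hadj : G.Adj p.1 p.2 := by by_contra h; simp [h] at hp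
    exact fun hswap => hadj.ne (congrArg Prod.fst hswap).symm

lemma sum_consField_eq_zero {d n : ℕ} (G : SimpleGraph (Fin n)) [DecidableRel G.Adj]
    (x : Fin n → EuclideanSpace ℝ (Fin d)) :
    ∑ i, consField G x i = 0 :=
  G.sum_sum_neighborFinset_eq_zero fun i j _ => bearing_swap x i j

theorem stmt_4_general {d n : ℕ}
    (G : SimpleGraph (Fin n)) [DecidableRel G.Adj]
    (x : ℝ → Fin n → EuclideanSpace ℝ (Fin d))
    (hode : ∀ i t, HasDerivAt (fun s => x s i) (consField G (x t) i) t) :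
    ∀ t₁ t₂ : ℝ, (n : ℝ)⁻¹ • ∑ i, x t₁ i = (n : ℝ)⁻¹ • ∑ i, x t₂ i := by
  have hsum : ∀ t, HasDerivAt (fun s => ∑ i, x s i) 0 t := fun t => by
    simpa only [sum_consField_eq_zero] using HasDerivAt.fun_sum (u := univ) fun i _ => hode i t
  intro t₁ t₂
  rw [is_const_of_deriv_eq_zero (fun t => (hsum t).differentiableAt) (fun t => (hsum t).deriv)
    t₁ t₂]

theorem stmt_4 {d n : ℕ} (hd : 1 ≤ d)
    (G : SimpleGraph (Fin n)) [DecidableRel G.Adj]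
    (x : ℝ → Fin n → EuclideanSpace ℝ (Fin d))
    (hode : ∀ i t, HasDerivAt (fun s => x s i) (consField G (x t) i) t) :
    ∀ t₁ t₂ : ℝ, (n : ℝ)⁻¹ • ∑ i, x t₁ i = (n : ℝ)⁻¹ • ∑ i, x t₂ i :=
  stmt_4_general G x hode
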